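/- arXiv:2408.01352 — 4 statements merged into one kernel-verified Lean document; each statement's English description precedes it below -/
import Mathlib

section
/- Let a ≥ 1 be an integer, R > 0, and ζ ∈ tD^{a+2}_R. For r > 0 define ζ_r(t) := min(t^{a+2}/r^{a+2}, 1) · ζ(t) for t > 0. Then ζ_r extends continuously by the value 0 at t = 0 to a continuous function on [0,∞) with support in [0,R], ζ_r ∈ tD^{a+2}_R, ‖ζ − ζ_r‖ ≤ sup_{0 < s ≤ r} s^{a+2}|ζ(s)|, and ‖ζ − ζ_r‖ → 0 as r → 0+. In particular, the set of elements of tD^{a+2}_R that extend to continuous compactly supported functions on [0,∞) is dense in tD^{a+2}_R. -/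
/-!
On `(0, r]` the truncation factor lies in `[0, 1]`, so `|ζ - ζ_r| ≤ |ζ|` there, while `ζ_r = ζ`
on `[r, ∞)`. Hence the weighted difference `t^{a+2}|ζ - ζ_r|` is controlled by the supremum of
`s^{a+2}|ζ(s)|` over `(0, r]`, which tends to `0` with `r` because `t^{a+2} ζ(t) → 0` as `t → 0⁺`.
Near `0` the factor is at most `t^{a+2}/r^{a+2}`, which makes `ζ_r(t) → 0`.
-/

noncomputable section

open Filter Topology

/-- `ζ` (encoded as a function on `ℝ` vanishing on `(-∞,0]`) is an element of
`tD^{a+2}_R`. -/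
def MemTD (a : ℕ) (R : ℝ) (ζ : ℝ → ℝ) : Prop :=
  ContinuousOn ζ (Set.Ioi 0) ∧ (∀ t ≤ (0 : ℝ), ζ t = 0) ∧ (∀ t : ℝ, R < t → ζ t = 0) ∧
  Tendsto (fun t : ℝ => t ^ (a + 2) * ζ t) (nhdsWithin 0 (Set.Ioi 0)) (𝓝 0)

/-- The truncation `ζ_r(t) := min(t^{a+2}/r^{a+2}, 1) · ζ(t)`. -/
def truncTD (a : ℕ) (ζ : ℝ → ℝ) (r : ℝ) : ℝ → ℝ :=
  fun t => min (t ^ (a + 2) / r ^ (a + 2)) 1 * ζ t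

open Set

section Order

variable {α : Type*} [LinearOrder α] [TopologicalSpace α]

lemma ContinuousOn.Ici_of_Ioi [ClosedIicTopology α] {β : Type*} [TopologicalSpace β]
    {f : α → β} {a : α} (hf : ContinuousOn f (Ioi a))
    (ha : Tendsto f (𝓝[>] a) (𝓝 (f a))) : ContinuousOn f (Ici a) := by
  intro t ht
  rcases (mem_Ici.1 ht).eq_or_lt with rfl | hat
  · exact continuousWithinAt_Ioi_iff_Ici.1 ha
  · exact ((hf t hat).continuousAt (Ioi_mem_nhds hat)).continuousWithinAt

lemma eventually_nhdsGT_forall_Ioc [OrderTopology α] [NoMaxOrder α] {p : α → Prop} {a : α}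
    (hp : ∀ᶠ t in 𝓝[>] a, p t) :
    ∀ᶠ r in 𝓝[>] a, ∀ s ∈ Ioc a r, p s := by
  obtain ⟨u, hau, hu⟩ := mem_nhdsGT_iff_exists_Ioo_subset.1 hp
  filter_upwards [Ioo_mem_nhdsGT hau] with r hr s hs
  exact hu ⟨hs.1, hs.2.trans_lt hr.2⟩

end Order

namespace MemTD

variable {a : ℕ} {R : ℝ} {ζ : ℝ → ℝ}

lemma continuousOn_Ici_pow_mul (hζ : MemTD a R ζ) :
    ContinuousOn (fun t : ℝ => t ^ (a + 2) * ζ t) (Ici 0) := by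
  refine ContinuousOn.Ici_of_Ioi ((continuous_pow _).continuousOn.mul hζ.1) ?_
  simpa [hζ.2.1 0 le_rfl] using hζ.2.2.2

lemma bddAbove_pow_mul_abs (hζ : MemTD a R ζ) (r : ℝ) :
    BddAbove ((fun s : ℝ => s ^ (a + 2) * |ζ s|) '' Ioc 0 r) := by
  have hc : ContinuousOn (fun t : ℝ => |t ^ (a + 2) * ζ t|) (Icc 0 r) :=
    (hζ.continuousOn_Ici_pow_mul.mono Icc_subset_Ici_self).abs
  refine ((isCompact_Icc.image_of_continuousOn hc).bddAbove).mono ?_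
  rintro _ ⟨s, hs, rfl⟩
  refine ⟨s, Ioc_subset_Icc_self hs, ?_⟩
  simp only [abs_mul, abs_pow, abs_of_pos hs.1]

lemma eventually_forall_Ioc_pow_mul_abs_le (hζ : MemTD a R ζ) {ε : ℝ} (hε : 0 < ε) :
    ∀ᶠ r in 𝓝[>] 0, ∀ s ∈ Ioc 0 r, s ^ (a + 2) * |ζ s| ≤ ε := by
  refine eventually_nhdsGT_forall_Ioc ?_
  filter_upwards [hζ.2.2.2.abs.eventually (ge_mem_nhds (by simpa using hε)),
    self_mem_nhdsWithin] with s hs (hs0 : 0 < s)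
  simpa only [abs_mul, abs_pow, abs_of_pos hs0] using hs

end MemTD

section truncTD

variable {a : ℕ} {ζ : ℝ → ℝ} {r t : ℝ}

lemma truncTD_factor_nonneg (hr : 0 ≤ r) (ht : 0 ≤ t) :
    0 ≤ min (t ^ (a + 2) / r ^ (a + 2)) 1 := by
  positivity

lemma abs_truncTD_le (hr : 0 ≤ r) (ht : 0 ≤ t) : |truncTD a ζ r t| ≤ |ζ t| := by
  rw [truncTD, abs_mul, abs_of_nonneg (truncTD_factor_nonneg hr ht)]
  exact mul_le_of_le_one_left (abs_nonneg _) (min_le_right _ _)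

lemma abs_truncTD_le_div (hr : 0 ≤ r) (ht : 0 ≤ t) :
    |truncTD a ζ r t| ≤ t ^ (a + 2) / r ^ (a + 2) * |ζ t| := by
  rw [truncTD, abs_mul, abs_of_nonneg (truncTD_factor_nonneg hr ht)]
  exact mul_le_mul_of_nonneg_right (min_le_left _ _) (abs_nonneg _)

lemma abs_sub_truncTD_le (hr : 0 ≤ r) (ht : 0 ≤ t) : |ζ t - truncTD a ζ r t| ≤ |ζ t| := by
  have hfac := truncTD_factor_nonneg (a := a) hr ht
  have hsub : ζ t - truncTD a ζ r t = (1 - min (t ^ (a + 2) / r ^ (a + 2)) 1) * ζ t := by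
    rw [truncTD]; ring
  rw [hsub, abs_mul, abs_of_nonneg (sub_nonneg.2 (min_le_right _ _))]
  exact mul_le_of_le_one_left (abs_nonneg _) (by linarith)

lemma truncTD_eq_of_le (hr : 0 < r) (h : r ≤ t) : truncTD a ζ r t = ζ t := by
  rw [truncTD, min_eq_right, one_mul]
  exact (one_le_div (pow_pos hr _)).2 (pow_le_pow_left₀ hr.le h _)

lemma pow_mul_abs_sub_truncTD_le {ε : ℝ} (hr : 0 < r)
    (hζr : ∀ s ∈ Ioc 0 r, s ^ (a + 2) * |ζ s| ≤ ε) (ht : 0 < t) :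
    t ^ (a + 2) * |ζ t - truncTD a ζ r t| ≤ ε := by
  rcases le_or_gt t r with htr | hrt
  · exact (mul_le_mul_of_nonneg_left (abs_sub_truncTD_le hr.le ht.le) (by positivity)).trans
      (hζr t ⟨ht, htr⟩)
  · rw [truncTD_eq_of_le hr hrt.le, sub_self, abs_zero, mul_zero]
    exact (by positivity : (0 : ℝ) ≤ r ^ (a + 2) * |ζ r|).trans (hζr r ⟨hr, le_rfl⟩)

lemma sSup_pow_mul_abs_sub_truncTD_le {ε : ℝ} (hr : 0 < r)
    (hζr : ∀ s ∈ Ioc 0 r, s ^ (a + 2) * |ζ s| ≤ ε) :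
    sSup ((fun t : ℝ => t ^ (a + 2) * |ζ t - truncTD a ζ r t|) '' Ioi 0) ≤ ε :=
  csSup_le (nonempty_Ioi.image _) <| by
    rintro _ ⟨t, ht, rfl⟩
    exact pow_mul_abs_sub_truncTD_le hr hζr ht

variable {R : ℝ}

lemma tendsto_truncTD_nhdsGT_zero (hζ : MemTD a R ζ) (hr : 0 ≤ r) :
    Tendsto (truncTD a ζ r) (𝓝[>] 0) (𝓝 0) := by
  refine squeeze_zero_norm' (a := fun t => |t ^ (a + 2) * ζ t| / r ^ (a + 2)) ?_
    (by simpa using hζ.2.2.2.abs.div_const (r ^ (a + 2)))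
  filter_upwards [self_mem_nhdsWithin] with t (ht : 0 < t)
  calc ‖truncTD a ζ r t‖ ≤ t ^ (a + 2) / r ^ (a + 2) * |ζ t| := abs_truncTD_le_div hr ht.le
    _ = |t ^ (a + 2) * ζ t| / r ^ (a + 2) := by
      rw [abs_mul, abs_pow, abs_of_pos ht]; ring

lemma continuousOn_Ioi_truncTD (hζ : MemTD a R ζ) : ContinuousOn (truncTD a ζ r) (Ioi 0) :=
  (((continuous_pow _).div_const _).min continuous_const).continuousOn.mul hζ.1

lemma truncTD_of_nonpos (hζ : MemTD a R ζ) (ht : t ≤ 0) : truncTD a ζ r t = 0 := by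
  rw [truncTD, hζ.2.1 t ht, mul_zero]

lemma truncTD_of_lt (hζ : MemTD a R ζ) (ht : R < t) : truncTD a ζ r t = 0 := by
  rw [truncTD, hζ.2.2.1 t ht, mul_zero]

lemma continuousOn_Ici_truncTD (hζ : MemTD a R ζ) (hr : 0 ≤ r) :
    ContinuousOn (truncTD a ζ r) (Ici 0) :=
  (continuousOn_Ioi_truncTD hζ).Ici_of_Ioi <| by
    simpa only [truncTD_of_nonpos hζ le_rfl] using tendsto_truncTD_nhdsGT_zero hζ hr

lemma memTD_truncTD (hζ : MemTD a R ζ) (hr : 0 ≤ r) : MemTD a R (truncTD a ζ r) := by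
  refine ⟨continuousOn_Ioi_truncTD hζ, fun t ht => truncTD_of_nonpos hζ ht,
    fun t ht => truncTD_of_lt hζ ht,
    squeeze_zero_norm' ?_ (tendsto_zero_iff_norm_tendsto_zero.1 hζ.2.2.2)⟩
  filter_upwards [self_mem_nhdsWithin] with t (ht : 0 < t)
  simp only [norm_mul]
  exact mul_le_mul_of_nonneg_left (abs_truncTD_le hr ht.le) (norm_nonneg _)

lemma tendsto_sSup_pow_mul_abs_sub_truncTD (hζ : MemTD a R ζ) :
    Tendsto (fun r => sSup ((fun t : ℝ => t ^ (a + 2) * |ζ t - truncTD a ζ r t|) '' Ioi 0))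
      (𝓝[>] 0) (𝓝 0) := by
  refine tendsto_order.2 ⟨fun ε hε => Eventually.of_forall fun r => hε.trans_le ?_,
    fun ε hε => ?_⟩
  · exact Real.sSup_nonneg <| by rintro _ ⟨t, ht : 0 < t, rfl⟩; positivity
  filter_upwards [hζ.eventually_forall_Ioc_pow_mul_abs_le (half_pos hε),
    self_mem_nhdsWithin] with r hζr (hr : 0 < r)
  exact (sSup_pow_mul_abs_sub_truncTD_le hr hζr).trans_lt (half_lt_self hε)

end truncTD

theorem stmt4_general (a : ℕ) (R : ℝ) (ζ : ℝ → ℝ)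
    (hζ : MemTD a R ζ) :
    (∀ r : ℝ, 0 < r →
      ContinuousOn (truncTD a ζ r) (Set.Ici 0) ∧ truncTD a ζ r 0 = 0 ∧
      (∀ t : ℝ, R < t → truncTD a ζ r t = 0) ∧
      MemTD a R (truncTD a ζ r) ∧
      (∀ t : ℝ, 0 < t → t ^ (a + 2) * |ζ t - truncTD a ζ r t| ≤
        sSup ((fun s : ℝ => s ^ (a + 2) * |ζ s|) '' Set.Ioc 0 r))) ∧
    Tendsto (fun r : ℝ => sSup ((fun t : ℝ => t ^ (a + 2) * |ζ t - truncTD a ζ r t|) ''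
        Set.Ioi 0)) (nhdsWithin 0 (Set.Ioi 0)) (𝓝 0) ∧
    (∀ ε : ℝ, 0 < ε → ∃ ξ : ℝ → ℝ, MemTD a R ξ ∧
      (∃ c : ℝ, Tendsto ξ (nhdsWithin 0 (Set.Ioi 0)) (𝓝 c)) ∧
      ∀ t : ℝ, 0 < t → t ^ (a + 2) * |ζ t - ξ t| ≤ ε) := by
  refine ⟨fun r hr => ⟨continuousOn_Ici_truncTD hζ hr.le, truncTD_of_nonpos hζ le_rfl,
    fun t ht => truncTD_of_lt hζ ht, memTD_truncTD hζ hr.le,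
    fun t ht => pow_mul_abs_sub_truncTD_le hr
      (fun s hs => le_csSup (hζ.bddAbove_pow_mul_abs r) ⟨s, hs, rfl⟩) ht⟩,
    tendsto_sSup_pow_mul_abs_sub_truncTD hζ, fun ε hε => ?_⟩
  obtain ⟨r, hζr, hr : 0 < r⟩ :=
    ((hζ.eventually_forall_Ioc_pow_mul_abs_le hε).and self_mem_nhdsWithin).exists
  exact ⟨truncTD a ζ r, memTD_truncTD hζ hr.le, ⟨0, tendsto_truncTD_nhdsGT_zero hζ hr.le⟩,
    fun t ht => pow_mul_abs_sub_truncTD_le hr hζr ht⟩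

/-- For `ζ ∈ tD^{a+2}_R` and `r > 0`, the truncation `ζ_r` extends
continuously by `0` at `t = 0` to a continuous function on `[0,∞)` supported in
`[0,R]`, belongs to `tD^{a+2}_R`, satisfies
`‖ζ - ζ_r‖ ≤ sup_{0<s≤r} s^{a+2}|ζ(s)|`, and `‖ζ - ζ_r‖ → 0` as `r → 0⁺`.
In particular the elements of `tD^{a+2}_R` extending continuously to `[0,∞)` are
dense. -/
theorem stmt4 (a : ℕ) (ha : 1 ≤ a) (R : ℝ) (hR : 0 < R) (ζ : ℝ → ℝ)
    (hζ : MemTD a R ζ) :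
    (∀ r : ℝ, 0 < r →
      ContinuousOn (truncTD a ζ r) (Set.Ici 0) ∧ truncTD a ζ r 0 = 0 ∧
      (∀ t : ℝ, R < t → truncTD a ζ r t = 0) ∧
      MemTD a R (truncTD a ζ r) ∧
      (∀ t : ℝ, 0 < t → t ^ (a + 2) * |ζ t - truncTD a ζ r t| ≤
        sSup ((fun s : ℝ => s ^ (a + 2) * |ζ s|) '' Set.Ioc 0 r))) ∧
    Tendsto (fun r : ℝ => sSup ((fun t : ℝ => t ^ (a + 2) * |ζ t - truncTD a ζ r t|) ''
        Set.Ioi 0)) (nhdsWithin 0 (Set.Ioi 0)) (𝓝 0) ∧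
    (∀ ε : ℝ, 0 < ε → ∃ ξ : ℝ → ℝ, MemTD a R ξ ∧
      (∃ c : ℝ, Tendsto ξ (nhdsWithin 0 (Set.Ioi 0)) (𝓝 c)) ∧
      ∀ t : ℝ, 0 < t → t ^ (a + 2) * |ζ t - ξ t| ≤ ε) :=
  stmt4_general a R ζ hζ
end
end

section
/- Let a ≥ 1 be an integer and R > 0. For every ζ ∈ D^a_R, the function R^a(ζ) extends continuously to [0,∞) (with value at 0 equal to a·lim_{t→0+} ∫_t^∞ ζ(r) r^{a−1} dr) and this extension lies in C_{c,R}([0,∞)). The resulting map R^a : D^a_R → C_{c,R}([0,∞)) is a linear bijection whose inverse is given by (R^a)^{−1}(φ)(t) = φ(t) t^{−a} − a ∫_t^∞ φ(s) s^{−a−1} ds for t > 0, and both R^a and its inverse are continuous: there exist constants c₁, c₂ > 0 (depending on a and R) such that sup_{t≥0} |R^a(ζ)(t)| ≤ c₁ ‖ζ‖_{D^a} for all ζ ∈ D^a_R and ‖(R^a)^{−1}(φ)‖_{D^a} ≤ c₂ sup_{t≥0} |φ(t)| for all φ ∈ C_{c,R}([0,∞)). -/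
/-!
With `F(t) = ∫_t^∞ ζ(r) r^(a-1) dr` we have `F' = -ζ(t) t^(a-1)`, hence
`R^a(ζ)(t) = t^a ζ(t) + a F(t) = -t^(a+1) (F(t) / t^a)'`, so that
`∫_t^∞ R^a(ζ)(s) s^(-a-1) ds = F(t) / t^a` and `(R^a)⁻¹ (R^a ζ) = ζ`, which gives injectivity.
Symmetrically, with `G(t) = ∫_t^∞ φ(s) s^(-a-1) ds` one has
`(t^a G(t))' = -(R^a)⁻¹(φ)(t) t^(a-1)`, so `R^a ((R^a)⁻¹ φ) = φ`.
The behaviour at `0` comes from `t^a G(t) = ∫_1^∞ φ(t u) u^(-a-1) du → φ(0) / a` (dominated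
convergence), and both bounds from `∫_t^∞ s^(-a-1) ds = t^(-a) / a`.
-/

noncomputable section

open Filter Topology

/-- `ζ` (encoded as a function on `ℝ` vanishing on `(-∞,0]`) belongs to `D^a_R`:
continuous on `(0,∞)`, supported in `(0,R]`, `t^a ζ(t) → 0` as `t → 0⁺`, and
`∫_t^∞ ζ(r) r^{a-1} dr` has a finite limit as `t → 0⁺`. -/
def MemD (a : ℕ) (R : ℝ) (ζ : ℝ → ℝ) : Prop :=
  ContinuousOn ζ (Set.Ioi 0) ∧ (∀ t ≤ (0 : ℝ), ζ t = 0) ∧ (∀ t : ℝ, R < t → ζ t = 0) ∧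
  Tendsto (fun t : ℝ => t ^ a * ζ t) (nhdsWithin 0 (Set.Ioi 0)) (𝓝 0) ∧
  ∃ L : ℝ, Tendsto (fun t : ℝ => ∫ r in Set.Ioi t, ζ r * r ^ (a - 1))
    (nhdsWithin 0 (Set.Ioi 0)) (𝓝 L)

/-- `φ` (encoded as a function on `ℝ` vanishing on `(-∞,0)`) belongs to
`C_{c,R}([0,∞))`: continuous on `[0,∞)` with support contained in `[0,R]`. -/
def MemCc (R : ℝ) (φ : ℝ → ℝ) : Prop :=
  ContinuousOn φ (Set.Ici 0) ∧ (∀ t : ℝ, t < 0 → φ t = 0) ∧ (∀ t : ℝ, R < t → φ t = 0)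

/-- The transform `R^a`. -/
def Ra (a : ℕ) (ζ : ℝ → ℝ) : ℝ → ℝ :=
  fun t => ζ t * t ^ a + a * ∫ s in Set.Ioi t, ζ s * s ^ (a - 1)

/-- The inverse transform `(R^a)⁻¹(φ)(t) = φ(t) t^{-a} - a ∫_t^∞ φ(s) s^{-a-1} ds`. -/
def RaInv (a : ℕ) (φ : ℝ → ℝ) : ℝ → ℝ :=
  fun t => if 0 < t then φ t / t ^ a - a * ∫ s in Set.Ioi t, φ s / s ^ (a + 1) else 0

/-- The norm `‖ζ‖_{D^a} = sup_{t>0} t^a |ζ(t)| + sup_{t>0} |∫_t^∞ ζ(r) r^{a-1} dr|`. -/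
def DNorm (a : ℕ) (ζ : ℝ → ℝ) : ℝ :=
  sSup ((fun t : ℝ => t ^ a * |ζ t|) '' Set.Ioi 0) +
  sSup ((fun t : ℝ => |∫ r in Set.Ioi t, ζ r * r ^ (a - 1)|) '' Set.Ioi 0)

open MeasureTheory Set

section TailIntegral

variable {f : ℝ → ℝ} {R : ℝ}

lemma integrableOn_Ioi_of_continuousOn_of_eq_zero {t : ℝ} (hf : ContinuousOn f (Ici t))
    (hf0 : ∀ x, R < x → f x = 0) : IntegrableOn f (Ioi t) := by
  have hsplit : Ioi t ⊆ Icc t (max R t) ∪ Ioi (max R t) := fun x hx =>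
    (le_or_gt x (max R t)).imp (fun h => ⟨hx.out.le, h⟩) id
  refine (IntegrableOn.union ?_ ?_).mono_set hsplit
  · exact (hf.mono Icc_subset_Ici_self).integrableOn_Icc
  · exact integrableOn_zero.congr_fun
      (fun x hx => (hf0 x ((le_max_left R t).trans_lt hx)).symm) measurableSet_Ioi

lemma integral_Ioi_eq_zero_of_le {t : ℝ} (hf0 : ∀ x, R < x → f x = 0) (ht : R ≤ t) :
    ∫ x in Ioi t, f x = 0 :=
  setIntegral_eq_zero_of_forall_eq_zero fun x hx => hf0 x (ht.trans_lt hx)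

lemma integral_Ioi_eq_intervalIntegral_of_eq_zero {u : ℝ} (huR : u ≤ R)
    (hf : IntegrableOn f (Ioi u)) (hf0 : ∀ x, R < x → f x = 0) : ∫ x in Ioi u, f x = ∫ x in u..R, f x := by
  rw [intervalIntegral.integral_of_le huR, ← Ioc_union_Ioi_eq_Ioi huR,
    setIntegral_union (Ioc_disjoint_Ioi le_rfl) measurableSet_Ioi
      (hf.mono_set Ioc_subset_Ioi_self) (hf.mono_set (Ioi_subset_Ioi huR)),
    integral_Ioi_eq_zero_of_le hf0 le_rfl, add_zero]

lemma hasDerivAt_integral_Ioi {c t : ℝ} (hf : ContinuousOn f (Ioi c))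
    (hf0 : ∀ x, R < x → f x = 0) (ht : c < t) :
    HasDerivAt (fun u => ∫ x in Ioi u, f x) (-f t) t := by
  set M := max R t + 1
  have htM : t < M := by linarith [le_max_right R t]
  have hM0 : ∀ x, M < x → f x = 0 := fun x hx => hf0 x (by linarith [le_max_left R t])
  have hderiv := intervalIntegral.integral_hasDerivAt_left (b := M)
    ((hf.mono fun x hx => ht.trans_le hx.1).intervalIntegrable_of_Icc htM.le)
    (hf.stronglyMeasurableAtFilter isOpen_Ioi t ht) (hf.continuousAt (isOpen_Ioi.mem_nhds ht))
  refine hderiv.congr_of_eventuallyEq ?_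
  filter_upwards [Ioo_mem_nhds ht htM] with u hu
  exact integral_Ioi_eq_intervalIntegral_of_eq_zero hu.2.le
    (integrableOn_Ioi_of_continuousOn_of_eq_zero (hf.mono fun x hx => hu.1.trans_le hx) hf0) hM0

lemma continuousOn_integral_Ioi {c : ℝ} (hf : ContinuousOn f (Ioi c))
    (hf0 : ∀ x, R < x → f x = 0) : ContinuousOn (fun u => ∫ x in Ioi u, f x) (Ioi c) :=
  fun _ ht => (hasDerivAt_integral_Ioi hf hf0 ht).continuousAt.continuousWithinAt

lemma integral_Ioi_eq_of_hasDerivAt {H : ℝ → ℝ} {t : ℝ}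
    (hH : ∀ s ∈ Ici t, HasDerivAt H (-f s) s) (hf : IntegrableOn f (Ioi t))
    (hH0 : ∀ s, R < s → H s = 0) : ∫ s in Ioi t, f s = H t := by
  have hlim : Tendsto (-H) atTop (𝓝 0) :=
    tendsto_const_nhds.congr' <| by
      filter_upwards [eventually_gt_atTop R] with s hs
      simp [hH0 s hs]
  simpa using integral_Ioi_of_hasDerivAt_of_tendsto' (f := -H)
    (fun s hs => by simpa using (hH s hs).neg) hf hlim

end TailIntegral

lemma inv_pow_succ_eq_rpow (n : ℕ) {s : ℝ} (hs : 0 < s) :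
    (s ^ (n + 1))⁻¹ = s ^ (-(n + 1 : ℝ)) := by
  rw [Real.rpow_neg hs.le, ← Real.rpow_natCast]
  push_cast
  rfl

lemma integrableOn_Ioi_inv_pow_succ {n : ℕ} (hn : n ≠ 0) {t : ℝ} (ht : 0 < t) :
    IntegrableOn (fun s : ℝ => (s ^ (n + 1))⁻¹) (Ioi t) := by
  have hn' : (0 : ℝ) < n := by positivity
  exact (integrableOn_Ioi_rpow_of_lt (by linarith) ht).congr_fun
    (fun s hs => (inv_pow_succ_eq_rpow n (ht.trans hs)).symm) measurableSet_Ioi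

lemma integral_Ioi_inv_pow_succ {n : ℕ} (hn : n ≠ 0) {t : ℝ} (ht : 0 < t) :
    ∫ s in Ioi t, (s ^ (n + 1))⁻¹ = (n * t ^ n)⁻¹ := by
  have hn' : (0 : ℝ) < n := by positivity
  rw [setIntegral_congr_fun measurableSet_Ioi fun s hs => inv_pow_succ_eq_rpow n (ht.trans hs),
    integral_Ioi_rpow_of_lt (by linarith) ht, show -(n + 1 : ℝ) + 1 = -n by ring,
    Real.rpow_neg ht.le, Real.rpow_natCast]
  field_simp

section Boundedness

variable {g : ℝ → ℝ} {R L : ℝ}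

lemma continuousOn_Ici_ite (hg : ContinuousOn g (Ioi 0)) (hlim : Tendsto g (𝓝[>] 0) (𝓝 L)) :
    ContinuousOn (fun t => if 0 < t then g t else L) (Ici 0) := by
  intro x hx
  rcases hx.out.eq_or_lt with rfl | hx
  · rw [← continuousWithinAt_Ioi_iff_Ici, ContinuousWithinAt, if_neg (lt_irrefl 0)]
    exact hlim.congr' (eventually_nhdsWithin_of_forall fun t ht => (if_pos ht).symm)
  · refine ((hg.continuousAt (Ioi_mem_nhds hx)).congr ?_).continuousWithinAt
    filter_upwards [Ioi_mem_nhds hx] with t ht using (if_pos ht).symm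

lemma bddAbove_abs_image_Ici (hg : ContinuousOn g (Ici 0)) (hg0 : ∀ t, R < t → g t = 0) :
    BddAbove ((fun t => |g t|) '' Ici 0) := by
  have hsub : (fun t => |g t|) '' Ici 0 ⊆ insert 0 ((fun t => |g t|) '' Icc 0 R) := by
    rintro _ ⟨t, ht, rfl⟩
    rcases le_or_gt t R with htR | htR
    · exact Or.inr ⟨t, ⟨ht, htR⟩, rfl⟩
    · exact Or.inl (by simp [hg0 t htR])
  exact ((isCompact_Icc.bddAbove_image
    (continuous_abs.comp_continuousOn (hg.mono Icc_subset_Ici_self))).insert 0).mono hsub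

lemma bddAbove_abs_image_Ioi (hg : ContinuousOn g (Ioi 0)) (hlim : Tendsto g (𝓝[>] 0) (𝓝 L))
    (hg0 : ∀ t, R < t → g t = 0) : BddAbove ((fun t => |g t|) '' Ioi 0) := by
  have hext := bddAbove_abs_image_Ici (R := max R 0) (continuousOn_Ici_ite hg hlim)
    fun t ht => by
      rw [if_pos ((le_max_right R 0).trans_lt ht), hg0 t ((le_max_left R 0).trans_lt ht)]
  refine hext.mono ?_
  rintro _ ⟨t, ht, rfl⟩
  exact ⟨t, ht.out.le, by simp only [if_pos ht.out]⟩

end Boundedness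

section MemCc

variable {R : ℝ} {φ : ℝ → ℝ}

lemma MemCc.tendsto_nhdsGT_zero (hφ : MemCc R φ) : Tendsto φ (𝓝[>] 0) (𝓝 (φ 0)) :=
  (hφ.1 0 self_mem_Ici).mono Ioi_subset_Ici_self

lemma MemCc.abs_le_sSup (hφ : MemCc R φ) {t : ℝ} (ht : 0 ≤ t) :
    |φ t| ≤ sSup ((fun t => |φ t|) '' Ici 0) :=
  le_csSup (bddAbove_abs_image_Ici hφ.1 hφ.2.2) ⟨t, ht, rfl⟩

end MemCc

section Transform

variable {a : ℕ} {R : ℝ} {ζ ζ₁ ζ₂ : ℝ → ℝ}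

lemma MemD.continuousOn_mul_pow (hζ : MemD a R ζ) (n : ℕ) :
    ContinuousOn (fun r => ζ r * r ^ n) (Ioi 0) :=
  hζ.1.mul (continuousOn_pow n)

lemma MemD.mul_pow_eq_zero (hζ : MemD a R ζ) (n : ℕ) {t : ℝ} (ht : R < t) : ζ t * t ^ n = 0 := by
  rw [hζ.2.2.1 t ht, zero_mul]

lemma MemD.integrableOn_mul_pow (hζ : MemD a R ζ) (n : ℕ) {t : ℝ} (ht : 0 < t) :
    IntegrableOn (fun r => ζ r * r ^ n) (Ioi t) :=
  integrableOn_Ioi_of_continuousOn_of_eq_zero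
    ((hζ.continuousOn_mul_pow n).mono fun _ hx => ht.trans_le hx) fun _ => hζ.mul_pow_eq_zero n

lemma Ra_add (hζ₁ : MemD a R ζ₁) (hζ₂ : MemD a R ζ₂) {t : ℝ} (ht : 0 < t) :
    Ra a (fun s => ζ₁ s + ζ₂ s) t = Ra a ζ₁ t + Ra a ζ₂ t := by
  simp only [Ra, add_mul,
    integral_add (hζ₁.integrableOn_mul_pow _ ht) (hζ₂.integrableOn_mul_pow _ ht)]
  ring

lemma Ra_const_mul (c : ℝ) (ζ : ℝ → ℝ) (t : ℝ) : Ra a (fun s => c * ζ s) t = c * Ra a ζ t := by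
  simp only [Ra, mul_assoc, integral_const_mul]
  ring

lemma continuousOn_Ra (hζ : MemD a R ζ) : ContinuousOn (Ra a ζ) (Ioi 0) :=
  (hζ.continuousOn_mul_pow a).add <| continuousOn_const.mul <|
    continuousOn_integral_Ioi (hζ.continuousOn_mul_pow _) fun _ => hζ.mul_pow_eq_zero _

lemma Ra_eq_zero_of_lt (hζ : MemD a R ζ) {t : ℝ} (ht : R < t) : Ra a ζ t = 0 := by
  rw [Ra, hζ.2.2.1 t ht, integral_Ioi_eq_zero_of_le (fun _ => hζ.mul_pow_eq_zero _) ht.le]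
  simp

lemma tendsto_Ra_nhdsGT_zero (hζ : MemD a R ζ) {L : ℝ}
    (hL : Tendsto (fun t => ∫ r in Ioi t, ζ r * r ^ (a - 1)) (𝓝[>] 0) (𝓝 L)) :
    Tendsto (Ra a ζ) (𝓝[>] 0) (𝓝 (a * L)) := by
  have h := hζ.2.2.2.1.add (hL.const_mul (a : ℝ))
  rw [zero_add] at h
  exact h.congr fun t => by rw [Ra, mul_comm (ζ t)]

lemma exists_memCc_extension_Ra (hR : 0 < R) (hζ : MemD a R ζ) :
    ∃ φ : ℝ → ℝ, MemCc R φ ∧ (∀ t : ℝ, 0 < t → φ t = Ra a ζ t) ∧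
      (∀ L : ℝ, Tendsto (fun t : ℝ => ∫ r in Ioi t, ζ r * r ^ (a - 1)) (𝓝[>] 0) (𝓝 L) →
        φ 0 = a * L) := by
  obtain ⟨L, hL⟩ := hζ.2.2.2.2
  refine ⟨fun t => if 0 < t then Ra a ζ t else if t = 0 then a * L else 0,
    ⟨?_, fun t ht => ?_, fun t ht => ?_⟩, fun t ht => if_pos ht, fun L' hL' => ?_⟩
  · refine (continuousOn_Ici_ite (continuousOn_Ra hζ) (tendsto_Ra_nhdsGT_zero hζ hL)).congr
      fun t ht => ?_
    rcases ht.out.eq_or_lt with rfl | ht <;> simp [*]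
  · simp [ht.not_gt, ht.ne]
  · simp [hR.trans ht, Ra_eq_zero_of_lt hζ ht]
  · simp [tendsto_nhds_unique hL' hL]

lemma RaInv_of_pos (φ : ℝ → ℝ) {t : ℝ} (ht : 0 < t) :
    RaInv a φ t = φ t / t ^ a - a * ∫ s in Ioi t, φ s / s ^ (a + 1) :=
  if_pos ht

lemma RaInv_congr {φ₁ φ₂ : ℝ → ℝ} (h : EqOn φ₁ φ₂ (Ioi 0)) : RaInv a φ₁ = RaInv a φ₂ := by
  funext t
  unfold RaInv
  split_ifs with ht
  · rw [h ht, setIntegral_congr_fun measurableSet_Ioi fun s hs => by rw [h (ht.trans hs)]]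
  · rfl

lemma hasDerivAt_integral_Ioi_mul_pow_div_pow (ha : 0 < a) (hζ : MemD a R ζ) {s : ℝ}
    (hs : 0 < s) :
    HasDerivAt (fun u => (∫ r in Ioi u, ζ r * r ^ (a - 1)) / u ^ a)
      (-(Ra a ζ s / s ^ (a + 1))) s := by
  have h := (hasDerivAt_integral_Ioi (hζ.continuousOn_mul_pow (a - 1))
    (fun _ => hζ.mul_pow_eq_zero _) hs).div (hasDerivAt_pow a s) (pow_ne_zero _ hs.ne')
  refine h.congr_deriv ?_
  obtain ⟨b, rfl⟩ : ∃ b, a = b + 1 := ⟨a - 1, (Nat.sub_add_cancel ha).symm⟩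
  rw [Ra, Nat.add_sub_cancel]
  push_cast
  field_simp
  ring

lemma integral_Ioi_Ra_div_pow (ha : 0 < a) (hζ : MemD a R ζ) {t : ℝ} (ht : 0 < t) :
    ∫ s in Ioi t, Ra a ζ s / s ^ (a + 1) = (∫ r in Ioi t, ζ r * r ^ (a - 1)) / t ^ a := by
  have hcont : ContinuousOn (fun s => Ra a ζ s / s ^ (a + 1)) (Ioi 0) :=
    (continuousOn_Ra hζ).div (continuousOn_pow _) fun s hs => pow_ne_zero _ (ne_of_gt hs)
  refine integral_Ioi_eq_of_hasDerivAt (R := R)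
    (fun s hs => hasDerivAt_integral_Ioi_mul_pow_div_pow ha hζ (ht.trans_le hs))
    (integrableOn_Ioi_of_continuousOn_of_eq_zero (hcont.mono fun _ hx => ht.trans_le hx)
      fun s hs => by rw [Ra_eq_zero_of_lt hζ hs, zero_div])
    fun s hs => by rw [integral_Ioi_eq_zero_of_le (fun _ => hζ.mul_pow_eq_zero _) hs.le, zero_div]

lemma RaInv_Ra (ha : 0 < a) (hζ : MemD a R ζ) {t : ℝ} (ht : 0 < t) :
    RaInv a (Ra a ζ) t = ζ t := by
  rw [RaInv_of_pos _ ht, integral_Ioi_Ra_div_pow ha hζ ht, Ra]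
  field_simp
  ring

lemma MemD.eq_of_Ra_eq (ha : 0 < a) (hζ₁ : MemD a R ζ₁) (hζ₂ : MemD a R ζ₂)
    (h : ∀ t : ℝ, 0 < t → Ra a ζ₁ t = Ra a ζ₂ t) : ζ₁ = ζ₂ := by
  funext t
  rcases le_or_gt t 0 with ht | ht
  · rw [hζ₁.2.1 t ht, hζ₂.2.1 t ht]
  · rw [← RaInv_Ra ha hζ₁ ht, ← RaInv_Ra ha hζ₂ ht, RaInv_congr fun s hs => h s hs]

end Transform

section Inverse

variable {a : ℕ} {R : ℝ} {φ : ℝ → ℝ}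

lemma MemCc.continuousOn_div_pow (hφ : MemCc R φ) (n : ℕ) :
    ContinuousOn (fun s => φ s / s ^ n) (Ioi 0) :=
  (hφ.1.mono Ioi_subset_Ici_self).div (continuousOn_pow n) fun _ hs => pow_ne_zero _ (ne_of_gt hs)

lemma MemCc.div_pow_eq_zero (hφ : MemCc R φ) (n : ℕ) {t : ℝ} (ht : R < t) : φ t / t ^ n = 0 := by
  rw [hφ.2.2 t ht, zero_div]

lemma continuousOn_RaInv (hφ : MemCc R φ) : ContinuousOn (RaInv a φ) (Ioi 0) :=
  ((hφ.continuousOn_div_pow a).sub <| continuousOn_const.mul <|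
    continuousOn_integral_Ioi (hφ.continuousOn_div_pow _) fun _ => hφ.div_pow_eq_zero _).congr
    fun _ ht => RaInv_of_pos φ ht

lemma RaInv_eq_zero_of_lt (hφ : MemCc R φ) {t : ℝ} (ht : R < t) : RaInv a φ t = 0 := by
  unfold RaInv
  split_ifs
  · rw [hφ.2.2 t ht, integral_Ioi_eq_zero_of_le (fun _ => hφ.div_pow_eq_zero _) ht.le]
    simp
  · rfl

lemma hasDerivAt_pow_mul_integral_Ioi_div_pow (ha : 0 < a) (hφ : MemCc R φ) {s : ℝ}
    (hs : 0 < s) :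
    HasDerivAt (fun u => u ^ a * ∫ x in Ioi u, φ x / x ^ (a + 1))
      (-(RaInv a φ s * s ^ (a - 1))) s := by
  have h := (hasDerivAt_pow a s).mul (hasDerivAt_integral_Ioi (hφ.continuousOn_div_pow (a + 1))
    (fun _ => hφ.div_pow_eq_zero _) hs)
  refine h.congr_deriv ?_
  obtain ⟨b, rfl⟩ : ∃ b, a = b + 1 := ⟨a - 1, (Nat.sub_add_cancel ha).symm⟩
  rw [RaInv_of_pos φ hs, Nat.add_sub_cancel]
  push_cast
  field_simp
  ring

lemma integral_Ioi_RaInv_mul_pow (ha : 0 < a) (hφ : MemCc R φ) {t : ℝ} (ht : 0 < t) :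
    ∫ r in Ioi t, RaInv a φ r * r ^ (a - 1) = t ^ a * ∫ s in Ioi t, φ s / s ^ (a + 1) := by
  have hcont : ContinuousOn (fun r => RaInv a φ r * r ^ (a - 1)) (Ioi 0) :=
    (continuousOn_RaInv hφ).mul (continuousOn_pow _)
  refine integral_Ioi_eq_of_hasDerivAt (R := R)
    (fun s hs => hasDerivAt_pow_mul_integral_Ioi_div_pow ha hφ (ht.trans_le hs))
    (integrableOn_Ioi_of_continuousOn_of_eq_zero (hcont.mono fun _ hx => ht.trans_le hx)
      fun s hs => by rw [RaInv_eq_zero_of_lt hφ hs, zero_mul])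
    fun s hs => by rw [integral_Ioi_eq_zero_of_le (fun _ => hφ.div_pow_eq_zero _) hs.le, mul_zero]

lemma Ra_RaInv (ha : 0 < a) (hφ : MemCc R φ) {t : ℝ} (ht : 0 < t) : Ra a (RaInv a φ) t = φ t := by
  rw [Ra, integral_Ioi_RaInv_mul_pow ha hφ ht, RaInv_of_pos φ ht]
  field_simp
  ring

lemma pow_mul_integral_Ioi_div_pow_eq (φ : ℝ → ℝ) {t : ℝ} (ht : 0 < t) :
    t ^ a * ∫ s in Ioi t, φ s / s ^ (a + 1) = ∫ u in Ioi 1, φ (t * u) / u ^ (a + 1) := by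
  have hscale := integral_comp_mul_left_Ioi (fun s => φ s / s ^ (a + 1)) 1 ht
  rw [mul_one, smul_eq_mul] at hscale
  calc t ^ a * ∫ s in Ioi t, φ s / s ^ (a + 1)
      = t ^ (a + 1) * ∫ u in Ioi 1, φ (t * u) / (t * u) ^ (a + 1) := by
        rw [hscale, pow_succ]
        field_simp
    _ = ∫ u in Ioi 1, φ (t * u) / u ^ (a + 1) := by
        rw [← integral_const_mul]
        refine setIntegral_congr_fun measurableSet_Ioi fun u _ => ?_
        rw [mul_pow]
        field_simp

end Inverse

section Limits

variable {a : ℕ} {R : ℝ} {φ : ℝ → ℝ}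

lemma tendsto_integral_Ioi_one_comp_mul (ha : 0 < a) (hφ : MemCc R φ) :
    Tendsto (fun t => ∫ u in Ioi 1, φ (t * u) / u ^ (a + 1)) (𝓝[>] 0) (𝓝 (φ 0 / a)) := by
  have hval : ∫ u in Ioi 1, φ 0 / u ^ (a + 1) = φ 0 / a := by
    simp_rw [div_eq_mul_inv, integral_const_mul, integral_Ioi_inv_pow_succ ha.ne' one_pos,
      one_pow, mul_one]
  rw [← hval]
  refine tendsto_integral_filter_of_dominated_convergence
    (fun u => sSup ((fun t => |φ t|) '' Ici 0) * (u ^ (a + 1))⁻¹) ?_ ?_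
    ((integrableOn_Ioi_inv_pow_succ ha.ne' one_pos).const_mul _) ?_
  · filter_upwards [self_mem_nhdsWithin] with t ht
    refine ContinuousOn.aestronglyMeasurable ?_ measurableSet_Ioi
    refine (hφ.1.comp (continuous_const_mul t).continuousOn fun u hu => ?_).div
      (continuousOn_pow _) fun u hu => pow_ne_zero _ (zero_lt_one.trans hu).ne'
    exact mul_nonneg ht.out.le (zero_le_one.trans hu.out.le)
  · filter_upwards [self_mem_nhdsWithin] with t ht
    refine (ae_restrict_iff' measurableSet_Ioi).mpr (ae_of_all _ fun u hu => ?_)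
    have hu0 : 0 < u := zero_lt_one.trans hu
    rw [Real.norm_eq_abs, abs_div, abs_of_pos (pow_pos hu0 _), div_eq_mul_inv]
    exact mul_le_mul_of_nonneg_right (hφ.abs_le_sSup (mul_nonneg ht.out.le hu0.le))
      (by positivity)
  · refine (ae_restrict_iff' measurableSet_Ioi).mpr (ae_of_all _ fun u hu => ?_)
    have hmul : Tendsto (fun t => t * u) (𝓝[>] 0) (𝓝[Ici 0] 0) := by
      refine tendsto_nhdsWithin_iff.mpr ⟨?_, ?_⟩
      · exact ((continuous_mul_const u).tendsto' 0 0 (zero_mul u)).mono_left nhdsWithin_le_nhds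
      · filter_upwards [self_mem_nhdsWithin] with t ht
        exact mul_nonneg ht.out.le (zero_le_one.trans hu.out.le)
    exact ((hφ.1 0 self_mem_Ici).tendsto.comp hmul).div_const _

lemma tendsto_pow_mul_integral_Ioi_div_pow (ha : 0 < a) (hφ : MemCc R φ) :
    Tendsto (fun t => t ^ a * ∫ s in Ioi t, φ s / s ^ (a + 1)) (𝓝[>] 0) (𝓝 (φ 0 / a)) :=
  (tendsto_integral_Ioi_one_comp_mul ha hφ).congr'
    (eventually_nhdsWithin_of_forall fun _ ht => (pow_mul_integral_Ioi_div_pow_eq φ ht).symm)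

lemma memD_RaInv (ha : 0 < a) (hφ : MemCc R φ) : MemD a R (RaInv a φ) := by
  have hlim := tendsto_pow_mul_integral_Ioi_div_pow ha hφ
  refine ⟨continuousOn_RaInv hφ, fun t ht => if_neg ht.not_gt,
    fun t ht => RaInv_eq_zero_of_lt hφ ht, ?_, φ 0 / a, hlim.congr'
      (eventually_nhdsWithin_of_forall fun t ht => (integral_Ioi_RaInv_mul_pow ha hφ ht).symm)⟩
  have h := hφ.tendsto_nhdsGT_zero.sub (hlim.const_mul (a : ℝ))
  rw [mul_div_cancel₀ _ (Nat.cast_ne_zero.mpr ha.ne'), sub_self] at h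
  refine h.congr' (eventually_nhdsWithin_of_forall fun t ht => ?_)
  dsimp only
  rw [RaInv_of_pos φ ht, mul_sub, mul_div_cancel₀ _ (pow_ne_zero a (ne_of_gt ht))]
  ring

end Limits

section Bounds

variable {a : ℕ} {R : ℝ} {ζ φ : ℝ → ℝ}

lemma abs_Ra_le (hζ : MemD a R ζ) {t : ℝ} (ht : 0 < t) : |Ra a ζ t| ≤ (a + 1) * DNorm a ζ := by
  obtain ⟨L, hL⟩ := hζ.2.2.2.2
  have hbdd₁ : BddAbove ((fun t => t ^ a * |ζ t|) '' Ioi 0) := by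
    have hcont : ContinuousOn (fun t => t ^ a * ζ t) (Ioi 0) := (continuousOn_pow a).mul hζ.1
    refine (bddAbove_abs_image_Ioi hcont hζ.2.2.2.1
      fun t ht => by rw [hζ.2.2.1 t ht, mul_zero]).mono ?_
    rintro _ ⟨s, hs, rfl⟩
    exact ⟨s, hs, by dsimp only; rw [abs_mul, abs_of_pos (pow_pos hs.out a)]⟩
  have hbdd₂ := bddAbove_abs_image_Ioi
    (continuousOn_integral_Ioi (hζ.continuousOn_mul_pow (a - 1)) fun _ => hζ.mul_pow_eq_zero _)
    hL fun _ hs => integral_Ioi_eq_zero_of_le (fun _ => hζ.mul_pow_eq_zero _) hs.le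
  have h₁ := le_csSup hbdd₁ ⟨t, ht, rfl⟩
  have h₂ := le_csSup hbdd₂ ⟨t, ht, rfl⟩
  have h₁0 := (by positivity : 0 ≤ t ^ a * |ζ t|).trans h₁
  have h₂0 := (abs_nonneg _).trans h₂
  calc |Ra a ζ t|
      ≤ t ^ a * |ζ t| + a * |∫ r in Ioi t, ζ r * r ^ (a - 1)| := by
        refine (abs_add_le _ _).trans_eq ?_
        rw [abs_mul, abs_mul, abs_of_pos (pow_pos ht a), Nat.abs_cast, mul_comm]
    _ ≤ (a + 1) * DNorm a ζ := by
        rw [DNorm]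
        dsimp only at h₁ h₂
        nlinarith

lemma pow_mul_abs_integral_Ioi_div_pow_le (ha : 0 < a) (hφ : MemCc R φ) {t : ℝ} (ht : 0 < t) :
    t ^ a * |∫ s in Ioi t, φ s / s ^ (a + 1)| ≤ sSup ((fun t => |φ t|) '' Ici 0) / a := by
  have hbound : ∀ᵐ s ∂volume.restrict (Ioi t),
      ‖φ s / s ^ (a + 1)‖ ≤ sSup ((fun t => |φ t|) '' Ici 0) * (s ^ (a + 1))⁻¹ := by
    refine (ae_restrict_iff' measurableSet_Ioi).mpr (ae_of_all _ fun s hs => ?_)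
    have hs0 : 0 < s := ht.trans hs
    rw [Real.norm_eq_abs, abs_div, abs_of_pos (pow_pos hs0 _), div_eq_mul_inv]
    exact mul_le_mul_of_nonneg_right (hφ.abs_le_sSup hs0.le) (by positivity)
  calc t ^ a * |∫ s in Ioi t, φ s / s ^ (a + 1)|
      ≤ t ^ a * ∫ s in Ioi t, sSup ((fun t => |φ t|) '' Ici 0) * (s ^ (a + 1))⁻¹ := by
        gcongr
        exact norm_integral_le_of_norm_le
          ((integrableOn_Ioi_inv_pow_succ ha.ne' ht).const_mul _) hbound
    _ = sSup ((fun t => |φ t|) '' Ici 0) / a := by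
        rw [integral_const_mul, integral_Ioi_inv_pow_succ ha.ne' ht]
        field_simp

lemma DNorm_RaInv_le (ha : 0 < a) (hφ : MemCc R φ) :
    DNorm a (RaInv a φ) ≤ 3 * sSup ((fun t => |φ t|) '' Ici 0) := by
  set S := sSup ((fun t => |φ t|) '' Ici 0)
  have hS0 : 0 ≤ S := (abs_nonneg _).trans (hφ.abs_le_sSup le_rfl)
  have h₁ : sSup ((fun t => t ^ a * |RaInv a φ t|) '' Ioi 0) ≤ 2 * S := by
    refine csSup_le (nonempty_Ioi.image _) ?_
    rintro _ ⟨t, ht, rfl⟩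
    have hpow : 0 < t ^ a := pow_pos ht a
    calc t ^ a * |RaInv a φ t|
        = |φ t - a * (t ^ a * ∫ s in Ioi t, φ s / s ^ (a + 1))| := by
          rw [← abs_of_pos hpow, ← abs_mul, RaInv_of_pos φ ht, abs_of_pos hpow]
          congr 1
          field_simp
      _ ≤ |φ t| + a * (t ^ a * |∫ s in Ioi t, φ s / s ^ (a + 1)|) := by
          refine (abs_sub _ _).trans_eq ?_
          rw [abs_mul, abs_mul, Nat.abs_cast, abs_of_pos hpow]
      _ ≤ S + a * (S / a) := by
          gcongr
          exacts [hφ.abs_le_sSup ht.out.le, pow_mul_abs_integral_Ioi_div_pow_le ha hφ ht]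
      _ = 2 * S := by
          field_simp
          ring
  have h₂ : sSup ((fun t => |∫ r in Ioi t, RaInv a φ r * r ^ (a - 1)|) '' Ioi 0) ≤ S := by
    refine csSup_le (nonempty_Ioi.image _) ?_
    rintro _ ⟨t, ht, rfl⟩
    dsimp only
    rw [integral_Ioi_RaInv_mul_pow ha hφ ht, abs_mul, abs_of_pos (pow_pos ht a)]
    exact (pow_mul_abs_integral_Ioi_div_pow_le ha hφ ht).trans
      (div_le_self hS0 (Nat.one_le_cast.mpr ha))
  rw [DNorm]
  linarith

end Bounds

/-- `R^a : D^a_R → C_{c,R}([0,∞))` extends continuously to `t = 0`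
(with value `a·lim_{t→0⁺} ∫_t^∞ ζ(r) r^{a-1} dr`), is a linear bijection with the
explicit inverse `RaInv`, and both maps are continuous for the respective norms. -/
theorem stmt5 (a : ℕ) (ha : 1 ≤ a) (R : ℝ) (hR : 0 < R) :
    -- the continuous extension to [0,∞), supported in [0,R]
    (∀ ζ : ℝ → ℝ, MemD a R ζ → ∃ φ : ℝ → ℝ, MemCc R φ ∧
      (∀ t : ℝ, 0 < t → φ t = Ra a ζ t) ∧
      (∀ L : ℝ, Tendsto (fun t : ℝ => ∫ r in Set.Ioi t, ζ r * r ^ (a - 1))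
          (nhdsWithin 0 (Set.Ioi 0)) (𝓝 L) → φ 0 = a * L)) ∧
    -- linearity
    (∀ ζ₁ ζ₂ : ℝ → ℝ, MemD a R ζ₁ → MemD a R ζ₂ → ∀ t : ℝ, 0 < t →
      Ra a (fun s => ζ₁ s + ζ₂ s) t = Ra a ζ₁ t + Ra a ζ₂ t) ∧
    (∀ ζ : ℝ → ℝ, MemD a R ζ → ∀ c : ℝ, ∀ t : ℝ, 0 < t →
      Ra a (fun s => c * ζ s) t = c * Ra a ζ t) ∧
    -- injectivity on D^a_R
    (∀ ζ₁ ζ₂ : ℝ → ℝ, MemD a R ζ₁ → MemD a R ζ₂ →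
      (∀ t : ℝ, 0 < t → Ra a ζ₁ t = Ra a ζ₂ t) → ζ₁ = ζ₂) ∧
    -- surjectivity, with the explicit inverse
    (∀ φ : ℝ → ℝ, MemCc R φ → MemD a R (RaInv a φ) ∧
      ∀ t : ℝ, 0 < t → Ra a (RaInv a φ) t = φ t) ∧
    -- continuity of R^a
    (∃ c₁ : ℝ, 0 < c₁ ∧ ∀ ζ : ℝ → ℝ, MemD a R ζ → ∀ t : ℝ, 0 < t →
      |Ra a ζ t| ≤ c₁ * DNorm a ζ) ∧
    -- continuity of the inverse
    (∃ c₂ : ℝ, 0 < c₂ ∧ ∀ φ : ℝ → ℝ, MemCc R φ →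
      DNorm a (RaInv a φ) ≤ c₂ * sSup ((fun t : ℝ => |φ t|) '' Set.Ici 0)) := by
  refine ⟨fun ζ hζ => exists_memCc_extension_Ra hR hζ,
    fun ζ₁ ζ₂ hζ₁ hζ₂ t ht => Ra_add hζ₁ hζ₂ ht, fun ζ _ c t _ => Ra_const_mul c ζ t,
    fun ζ₁ ζ₂ hζ₁ hζ₂ h => hζ₁.eq_of_Ra_eq ha hζ₂ h,
    fun φ hφ => ⟨memD_RaInv ha hφ, fun t ht => Ra_RaInv ha hφ ht⟩,
    ⟨a + 1, by positivity, fun ζ hζ t ht => abs_Ra_le hζ ht⟩,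
    ⟨3, by norm_num, fun φ hφ => DNorm_RaInv_le ha hφ⟩⟩
end
end

section
/- Let k ≥ 1 be an integer, a ≥ k a real number, t ≥ 0, and ζ a continuous function on [0,∞) with compact support. Then lim_{ε→0+} ∫_0^∞ ζ(r) r^a (h_ε′(r²))^k dr = 2^{−k} ∫_t^∞ ζ(r) r^{a−k} dr. -/
/-!
For `ε ≠ 0` and `u = √(s + ε²)` one has
`h_ε′(s) = (1 + (u - t) / √((u - t)² + ε²)) / (4u)`.
The quotient lies in `[-1, 1]` and `u ≥ r` at `s = r²`, so `0 ≤ h_ε′(r²) ≤ 1/(2r)` and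
`r^a (h_ε′(r²))^k ≤ 2^{-k} r^{a-k}`, which is bounded on the support of `ζ` because `a ≥ k`.
As `ε → 0` the quotient tends to the sign of `r - t`, so `h_ε′(r²)` tends to `1/(2r)` for
`r > t` and to `0` for `r < t`; dominated convergence gives the limit.
-/

noncomputable section

open Filter Topology

/-- The smooth approximation
`h_ε(s) = (1/2)[√((√(s+ε²) − t)² + ε²) + √(s+ε²) − t]`. -/
def heps (t ε : ℝ) : ℝ → ℝ := fun s =>
  (1 / 2) * (Real.sqrt ((Real.sqrt (s + ε ^ 2) - t) ^ 2 + ε ^ 2) + Real.sqrt (s + ε ^ 2) - t)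

open MeasureTheory Set Real

def hepsDeriv (t ε s : ℝ) : ℝ :=
  (1 + (√(s + ε ^ 2) - t) / √((√(s + ε ^ 2) - t) ^ 2 + ε ^ 2)) / (4 * √(s + ε ^ 2))

theorem hasDerivAt_heps {t ε s : ℝ} (hε : ε ≠ 0) (hs : 0 < s + ε ^ 2) :
    HasDerivAt (heps t ε) (hepsDeriv t ε s) s := by
  have hu : HasDerivAt (fun x ↦ √(x + ε ^ 2)) (1 / (2 * √(s + ε ^ 2))) s := by
    simpa using ((hasDerivAt_id s).add_const (ε ^ 2)).sqrt hs.ne'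
  have hv : 0 < (√(s + ε ^ 2) - t) ^ 2 + ε ^ 2 := by positivity
  have hw := (((hu.sub_const t).pow 2).add_const (ε ^ 2)).sqrt hv.ne'
  simp only [Pi.pow_apply] at hw
  refine (((hw.add hu).sub_const t).const_mul (1 / 2 : ℝ)).congr_deriv ?_
  have hu0 : 0 < √(s + ε ^ 2) := sqrt_pos.2 hs
  have hw0 : 0 < √((√(s + ε ^ 2) - t) ^ 2 + ε ^ 2) := sqrt_pos.2 hv
  unfold hepsDeriv
  field_simp
  ring

theorem deriv_heps_sq (t : ℝ) {ε : ℝ} (hε : ε ≠ 0) (r : ℝ) :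
    deriv (heps t ε) (r ^ 2) = hepsDeriv t ε (r ^ 2) :=
  (hasDerivAt_heps hε (by positivity)).deriv

theorem abs_div_sqrt_sq_add_sq_le_one (x y : ℝ) : |x / √(x ^ 2 + y ^ 2)| ≤ 1 := by
  rw [abs_div, abs_of_nonneg (sqrt_nonneg _)]
  exact div_le_one_of_le₀ (abs_le_sqrt (le_add_of_nonneg_right (sq_nonneg y))) (sqrt_nonneg _)

theorem hepsDeriv_nonneg (t ε s : ℝ) : 0 ≤ hepsDeriv t ε s := by
  have hquot := abs_le.1 (abs_div_sqrt_sq_add_sq_le_one (√(s + ε ^ 2) - t) ε)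
  exact div_nonneg (by linarith) (by positivity)

theorem hepsDeriv_sq_le (t ε : ℝ) {r : ℝ} (hr : 0 < r) :
    hepsDeriv t ε (r ^ 2) ≤ (2 * r)⁻¹ := by
  have hquot := abs_le.1 (abs_div_sqrt_sq_add_sq_le_one (√(r ^ 2 + ε ^ 2) - t) ε)
  have hru : r ≤ √(r ^ 2 + ε ^ 2) := le_sqrt_of_sq_le (le_add_of_nonneg_right (sq_nonneg ε))
  calc hepsDeriv t ε (r ^ 2) ≤ 2 / (4 * r) :=
        div_le_div₀ zero_le_two (by linarith) (by positivity) (by linarith)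
    _ = (2 * r)⁻¹ := by field_simp; ring

theorem rpow_mul_inv_two_mul_pow {r : ℝ} (hr : 0 < r) (a : ℝ) (k : ℕ) :
    r ^ a * (2 * r)⁻¹ ^ k = (2 ^ k)⁻¹ * r ^ (a - k) := by
  rw [rpow_sub hr, rpow_natCast, mul_inv, mul_pow, inv_pow, inv_pow]
  ring

theorem rpow_mul_hepsDeriv_sq_pow_le (t ε a : ℝ) (k : ℕ) {r : ℝ} (hr : 0 < r) :
    r ^ a * hepsDeriv t ε (r ^ 2) ^ k ≤ (2 ^ k)⁻¹ * r ^ (a - k) := by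
  rw [← rpow_mul_inv_two_mul_pow hr]
  gcongr
  · exact hepsDeriv_nonneg t ε _
  · exact hepsDeriv_sq_le t ε hr

theorem continuous_hepsDeriv_sq (t : ℝ) {ε : ℝ} (hε : ε ≠ 0) :
    Continuous (fun r ↦ hepsDeriv t ε (r ^ 2)) := by
  unfold hepsDeriv
  fun_prop (disch := first | positivity | (intro _; positivity))

theorem continuousAt_hepsDeriv_sq {t r : ℝ} (hr : 0 < r) (hrt : r ≠ t) :
    ContinuousAt (fun ε ↦ hepsDeriv t ε (r ^ 2)) 0 := by
  unfold hepsDeriv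
  fun_prop (disch := simp [sqrt_sq hr.le, sqrt_sq_eq_abs, hr.ne', sub_eq_zero, hrt])

theorem hepsDeriv_zero_sq {t r : ℝ} (hr : 0 < r) (hrt : r ≠ t) :
    hepsDeriv t 0 (r ^ 2) = (Ioi t).indicator (fun r ↦ (2 * r)⁻¹) r := by
  have hsign : hepsDeriv t 0 (r ^ 2) = (1 + (r - t) / |r - t|) / (4 * r) := by
    simp [hepsDeriv, sqrt_sq hr.le, sqrt_sq_eq_abs]
  rcases hrt.lt_or_gt with h | h
  · rw [hsign, abs_of_neg (sub_neg.2 h), div_neg, div_self (sub_ne_zero.2 hrt),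
      indicator_of_notMem (notMem_Ioi.2 h.le)]
    ring
  · rw [hsign, abs_of_pos (sub_pos.2 h), div_self (sub_ne_zero.2 hrt),
      indicator_of_mem (mem_Ioi.2 h)]
    field_simp
    norm_num

theorem tendsto_hepsDeriv_sq {t r : ℝ} (hr : 0 < r) (hrt : r ≠ t) :
    Tendsto (fun ε ↦ hepsDeriv t ε (r ^ 2)) (𝓝 0)
      (𝓝 ((Ioi t).indicator (fun r ↦ (2 * r)⁻¹) r)) :=
  hepsDeriv_zero_sq hr hrt ▸ (continuousAt_hepsDeriv_sq hr hrt).tendsto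

theorem tendsto_setIntegral_mul_rpow_mul_hepsDeriv_sq_pow {k : ℕ} (hk : k ≠ 0) {a : ℝ}
    (ha : (k : ℝ) ≤ a) (t : ℝ) {ζ : ℝ → ℝ} (hcont : ContinuousOn ζ (Ici 0)) {M : ℝ}
    (hM : ∀ r, M < r → ζ r = 0) :
    Tendsto (fun ε ↦ ∫ r in Ioi 0, ζ r * r ^ a * hepsDeriv t ε (r ^ 2) ^ k) (𝓝[≠] 0)
      (𝓝 (∫ r in Ioi 0, (Ioi t).indicator (fun r ↦ (2 ^ k)⁻¹ * (ζ r * r ^ (a - k))) r)) := by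
  obtain ⟨C, hC⟩ := (isCompact_Icc (a := (0 : ℝ)) (b := M)).exists_bound_of_continuousOn
    (hcont.mono fun _ hr ↦ hr.1)
  refine tendsto_integral_filter_of_dominated_convergence
    ((Ioc 0 M).indicator fun _ ↦ (2 ^ k)⁻¹ * (C * M ^ (a - k))) ?_ ?_ ?_ ?_
  · filter_upwards [self_mem_nhdsWithin] with ε hε
    refine ContinuousOn.aestronglyMeasurable ?_ measurableSet_Ioi
    exact ((hcont.mono Ioi_subset_Ici_self).mul
      (continuousOn_id.rpow_const fun r hr ↦ Or.inl hr.ne')).mul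
      ((continuous_hepsDeriv_sq t hε).pow k).continuousOn
  · refine .of_forall fun ε ↦ (ae_restrict_iff' measurableSet_Ioi).2 (.of_forall fun r hr ↦ ?_)
    replace hr : 0 < r := hr
    rcases le_or_gt r M with hrM | hrM
    · have hζ := hC r ⟨hr.le, hrM⟩
      have hC0 : 0 ≤ C := (norm_nonneg _).trans hζ
      have hnonneg : 0 ≤ r ^ a * hepsDeriv t ε (r ^ 2) ^ k := by
        have hd := hepsDeriv_nonneg t ε (r ^ 2)
        positivity
      rw [indicator_of_mem (show r ∈ Ioc 0 M from ⟨hr, hrM⟩), mul_assoc, norm_mul,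
        norm_of_nonneg hnonneg]
      calc ‖ζ r‖ * (r ^ a * hepsDeriv t ε (r ^ 2) ^ k)
          ≤ C * ((2 ^ k)⁻¹ * r ^ (a - k)) :=
            mul_le_mul hζ (rpow_mul_hepsDeriv_sq_pow_le t ε a k hr) hnonneg hC0
        _ ≤ C * ((2 ^ k)⁻¹ * M ^ (a - k)) := by gcongr
        _ = (2 ^ k)⁻¹ * (C * M ^ (a - k)) := by ring
    · simp [hM r hrM, indicator_of_notMem (fun h : r ∈ Ioc 0 M ↦ hrM.not_ge h.2)]
  · exact (integrableOn_const measure_Ioc_lt_top.ne).integrable_indicator measurableSet_Ioc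
  · filter_upwards [ae_restrict_of_ae (volume.ae_ne t), ae_restrict_mem measurableSet_Ioi]
      with r hrt (hr : 0 < r)
    convert (((tendsto_hepsDeriv_sq hr hrt).pow k).const_mul (ζ r * r ^ a)).mono_left
      nhdsWithin_le_nhds using 2
    by_cases htr : r ∈ Ioi t
    · rw [indicator_of_mem htr, indicator_of_mem htr, mul_assoc, rpow_mul_inv_two_mul_pow hr]
      ring
    · rw [indicator_of_notMem htr, indicator_of_notMem htr, zero_pow hk, mul_zero]

/-- For an integer `k ≥ 1`, a real `a ≥ k`, `t ≥ 0` and a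
continuous compactly supported `ζ` on `[0,∞)`,
`∫_0^∞ ζ(r) r^a (h_ε'(r²))^k dr → 2^{-k} ∫_t^∞ ζ(r) r^{a-k} dr` as `ε → 0⁺`. -/
theorem stmt10 (k : ℕ) (hk : 1 ≤ k) (a : ℝ) (ha : (k : ℝ) ≤ a) (t : ℝ) (ht : 0 ≤ t)
    (ζ : ℝ → ℝ) (hcont : ContinuousOn ζ (Set.Ici 0))
    (hsupp : ∃ M : ℝ, ∀ r : ℝ, M < r → ζ r = 0) :
    Tendsto
      (fun ε : ℝ => ∫ r in Set.Ioi (0 : ℝ), ζ r * r ^ a * (deriv (heps t ε) (r ^ 2)) ^ k)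
      (nhdsWithin 0 (Set.Ioi 0))
      (𝓝 (((2 : ℝ) ^ k)⁻¹ * ∫ r in Set.Ioi t, ζ r * r ^ (a - (k : ℝ)))) := by
  obtain ⟨M, hM⟩ := hsupp
  have hlim := tendsto_setIntegral_mul_rpow_mul_hepsDeriv_sq_pow (by omega) ha t hcont hM
  rw [setIntegral_indicator measurableSet_Ioi, inter_eq_right.2 (Ioi_subset_Ioi ht),
    integral_const_mul] at hlim
  refine (hlim.mono_left (nhdsWithin_mono 0 fun ε hε ↦ ne_of_gt hε)).congr' ?_
  filter_upwards [self_mem_nhdsWithin] with ε (hε : 0 < ε)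
  simp only [deriv_heps_sq t hε.ne']
end
end

section
/- For every integer a ≥ 1 there exists a continuous function ζ : (0,∞) → ℝ with bounded support such that lim_{t→0+} t^a ζ(t) = 0 and lim_{t→0+} ∫_t^∞ ζ(r) r^{a−1} dr exists in ℝ (i.e. ζ ∈ D^a), but ∫_0^∞ |ζ(r)| r^{a−1} dr = ∞. -/
/-!
Take `ζ(r) = φ'(1 - log r) / r^a` on `(0, 1]` and `ζ = 0` elsewhere, with `φ(u) = sin²(u - 1) / u`.
Then `ζ(r) r^(a-1) = -d/dr φ(1 - log r)`, so `∫_t^∞ ζ(r) r^(a-1) dr = φ(1 - log t) → 0`, and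
`t^a ζ(t) = φ'(1 - log t) → 0`, since `φ` and `φ'` are `O(1/u)`. But
`|φ'(u)| ≥ sin²(2(u - 1)) / u - 1 / u²`, whose average `1 / (2u)` is not integrable at infinity;
integrating the oscillating part by parts produces an explicit `w` with `w' ≤ |φ'|` on `[1, ∞)`
and `w(u) = (log u) / 2 + O(1 / u)`, so `∫_0^1 |ζ(r)| r^(a-1) dr = ∞`.
-/

noncomputable section

open Filter Topology Real Set MeasureTheory

theorem lintegral_ofReal_abs_Ioc_eq_top_of_hasDerivAt_le {f V V' : ℝ → ℝ} {a b : ℝ} (hab : a < b)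
    (hf : ContinuousOn f (Ioc a b)) (hV : ∀ x ∈ Ioc a b, HasDerivAt V (V' x) x)
    (hle : ∀ x ∈ Ioc a b, V' x ≤ |f x|) (hlim : Tendsto V (𝓝[>] a) atBot) :
    ∫⁻ x in Ioc a b, ENNReal.ofReal |f x| = ⊤ := by
  refine ENNReal.eq_top_of_forall_nnreal_le fun C => ?_
  obtain ⟨t, hVt, htab⟩ := ((hlim.eventually_le_atBot (V b - C)).and
    (Ioo_mem_nhdsGT hab)).exists
  have htb : Icc t b ⊆ Ioc a b := Icc_subset_Ioc htab.1 le_rfl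
  have hint : IntegrableOn (fun x => |f x|) (Icc t b) :=
    ((hf.mono htb).integrableOn_Icc).abs
  have hC : (C : ℝ) ≤ ∫ x in t..b, |f x| := by
    have := intervalIntegral.sub_le_integral_of_hasDeriv_right_of_le htab.2.le
      (fun x hx => (hV x (htb hx)).continuousAt.continuousWithinAt)
      (fun x hx => (hV x (htb (Ioo_subset_Icc_self hx))).hasDerivWithinAt) hint
      (fun x hx => hle x (htb (Ioo_subset_Icc_self hx)))
    linarith
  calc (C : ENNReal) = ENNReal.ofReal C := (ENNReal.ofReal_coe_nnreal).symm
    _ ≤ ENNReal.ofReal (∫ x in Ioc t b, |f x|) := by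
        rw [← intervalIntegral.integral_of_le htab.2.le]; exact ENNReal.ofReal_le_ofReal hC
    _ = ∫⁻ x in Ioc t b, ENNReal.ofReal |f x| :=
        ofReal_integral_eq_lintegral_ofReal (hint.mono_set Ioc_subset_Icc_self)
          (.of_forall fun x => abs_nonneg _)
    _ ≤ ∫⁻ x in Ioc a b, ENNReal.ofReal |f x| :=
        lintegral_mono_set (Ioc_subset_Ioc_left htab.1.le)

theorem setIntegral_Ioi_eq_intervalIntegral_of_eq_zero {g : ℝ → ℝ} {t b : ℝ} (htb : t ≤ b)
    (hg : ∀ x, b < x → g x = 0) : ∫ x in Ioi t, g x = ∫ x in t..b, g x := by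
  rw [intervalIntegral.integral_of_le htb,
    setIntegral_eq_of_subset_of_forall_sdiff_eq_zero measurableSet_Ioi Ioc_subset_Ioi_self]
  rintro x ⟨hxt, hxb⟩
  exact hg x (lt_of_not_ge fun h => hxb ⟨hxt, h⟩)

theorem one_le_one_sub_log {r : ℝ} (hr : r ∈ Ioc 0 1) : 1 ≤ 1 - log r := by
  linarith [log_nonpos hr.1.le hr.2]

theorem tendsto_one_sub_log_nhdsGT_zero :
    Tendsto (fun t => 1 - log t) (𝓝[>] 0) atTop :=
  tendsto_atTop_add_const_left _ 1 (tendsto_neg_atBot_atTop.comp tendsto_log_nhdsGT_zero)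

theorem hasDerivAt_comp_one_sub_log {f : ℝ → ℝ} {f' t : ℝ} (hf : HasDerivAt f f' (1 - log t))
    (ht : t ≠ 0) : HasDerivAt (fun x => f (1 - log x)) (-(f' / t)) t := by
  have h1 : HasDerivAt (fun x => 1 - log x) (0 - t⁻¹) t :=
    (hasDerivAt_const t 1).sub (hasDerivAt_log ht)
  exact (hf.comp t h1).congr_deriv (by ring)

namespace ConditionalKernel

def profile (u : ℝ) : ℝ := sin (u - 1) ^ 2 / u

def profileDeriv (u : ℝ) : ℝ := sin (2 * (u - 1)) / u - sin (u - 1) ^ 2 / u ^ 2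

theorem profile_one : profile 1 = 0 := by simp [profile]

theorem profileDeriv_one : profileDeriv 1 = 0 := by simp [profileDeriv]

theorem hasDerivAt_profile {u : ℝ} (hu : u ≠ 0) : HasDerivAt profile (profileDeriv u) u := by
  have h : HasDerivAt (fun x => sin (x - 1) ^ 2 / x) _ u :=
    (((hasDerivAt_id' u).sub_const 1).sin.pow 2).div (hasDerivAt_id' u) hu
  refine h.congr_deriv ?_
  simp only [profileDeriv, sin_two_mul, Pi.pow_apply]
  field_simp
  ring

theorem continuousOn_profileDeriv : ContinuousOn profileDeriv {0}ᶜ := by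
  unfold profileDeriv
  fun_prop (disch := grind)

theorem abs_profile_le {u : ℝ} (hu : 0 < u) : |profile u| ≤ 1 / u := by
  rw [profile, abs_div, abs_of_pos hu, abs_of_nonneg (sq_nonneg _)]
  gcongr
  exact sin_sq_le_one _

theorem tendsto_profile_atTop : Tendsto profile atTop (𝓝 0) :=
  squeeze_zero_norm' ((eventually_gt_atTop 0).mono fun _ => abs_profile_le)
    (tendsto_const_nhds.div_atTop tendsto_id)

theorem abs_profileDeriv_le {u : ℝ} (hu : 1 ≤ u) : |profileDeriv u| ≤ 2 / u := by
  have hu0 : 0 < u := one_pos.trans_le hu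
  have h1 : |sin (2 * (u - 1)) / u| ≤ 1 / u := by
    rw [abs_div, abs_of_pos hu0]; gcongr; exact abs_sin_le_one _
  have h2 : |sin (u - 1) ^ 2 / u ^ 2| ≤ 1 / u := by
    rw [abs_of_nonneg (by positivity), div_le_div_iff₀ (by positivity) hu0]
    nlinarith [sin_sq_le_one (u - 1)]
  calc |profileDeriv u| ≤ 1 / u + 1 / u := (abs_sub _ _).trans (add_le_add h1 h2)
    _ = 2 / u := by ring

theorem tendsto_profileDeriv_atTop : Tendsto profileDeriv atTop (𝓝 0) :=
  squeeze_zero_norm' ((eventually_ge_atTop 1).mono fun _ => abs_profileDeriv_le)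
    (tendsto_const_nhds.div_atTop tendsto_id)

def minorant (u : ℝ) : ℝ := log u / 2 - sin (4 * (u - 1)) / (8 * u) + 9 / (8 * u)

def minorantDeriv (u : ℝ) : ℝ :=
  (1 - cos (4 * (u - 1))) / (2 * u) + sin (4 * (u - 1)) / (8 * u ^ 2) - 9 / (8 * u ^ 2)

theorem hasDerivAt_minorant {u : ℝ} (hu : u ≠ 0) : HasDerivAt minorant (minorantDeriv u) u := by
  have h4 : HasDerivAt (fun x => 4 * (x - 1)) 4 u := by
    simpa using ((hasDerivAt_id u).sub_const 1).const_mul 4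
  have h8 : HasDerivAt (fun x => 8 * x) 8 u := by simpa using (hasDerivAt_id u).const_mul 8
  have h := (((hasDerivAt_log hu).div_const 2).sub (h4.sin.div h8 (by positivity))).add
    ((hasDerivAt_const u 9).div h8 (by positivity))
  refine h.congr_deriv ?_
  simp only [minorantDeriv]
  field_simp
  ring

theorem minorantDeriv_le_abs_profileDeriv {u : ℝ} (hu : 1 ≤ u) :
    minorantDeriv u ≤ |profileDeriv u| := by
  have hu0 : 0 < u := one_pos.trans_le hu
  have hcos : cos (4 * (u - 1)) = 1 - 2 * sin (2 * (u - 1)) ^ 2 := by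
    rw [show 4 * (u - 1) = 2 * (2 * (u - 1)) by ring, cos_two_mul, cos_sq']; ring
  have hsin : sin (2 * (u - 1)) ^ 2 ≤ |sin (2 * (u - 1))| := by
    rw [← sq_abs]; nlinarith [abs_nonneg (sin (2 * (u - 1))), abs_sin_le_one (2 * (u - 1))]
  have hm : u ^ 2 * minorantDeriv u ≤ u * sin (2 * (u - 1)) ^ 2 - 1 := by
    rw [minorantDeriv, hcos]
    field_simp
    linarith [sin_le_one ((u - 1) * 4)]
  have hp : u * sin (2 * (u - 1)) ^ 2 - 1 ≤ u ^ 2 * |profileDeriv u| := by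
    have : u ^ 2 * profileDeriv u = u * sin (2 * (u - 1)) - sin (u - 1) ^ 2 := by
      rw [profileDeriv]; field_simp
    rw [← abs_of_pos (by positivity : (0:ℝ) < u ^ 2), ← abs_mul, this]
    calc u * sin (2 * (u - 1)) ^ 2 - 1 ≤ |u * sin (2 * (u - 1))| - |sin (u - 1) ^ 2| := by
          rw [abs_mul, abs_of_pos hu0, abs_of_nonneg (sq_nonneg (sin (u - 1)))]
          nlinarith [sin_sq_le_one (u - 1)]
      _ ≤ _ := abs_sub_abs_le_abs_sub _ _
  exact le_of_mul_le_mul_left (hm.trans hp) (by positivity)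

theorem minorant_ge {u : ℝ} (hu : 1 ≤ u) : log u / 2 - 1 / 8 ≤ minorant u := by
  have hu0 : 0 < u := one_pos.trans_le hu
  have : sin (4 * (u - 1)) / (8 * u) ≤ 1 / 8 := by
    rw [div_le_div_iff₀ (by positivity) (by positivity)]
    linarith [sin_le_one (4 * (u - 1))]
  have : 0 ≤ 9 / (8 * u) := by positivity
  simp only [minorant]
  linarith

theorem tendsto_minorant_atTop : Tendsto minorant atTop atTop :=
  tendsto_atTop_mono' atTop ((eventually_ge_atTop 1).mono fun _ => minorant_ge)
    (tendsto_atTop_add_const_right _ _ (tendsto_log_atTop.atTop_div_const two_pos))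

-- As `profileDeriv 1 = 0`, capping `r` at `1` keeps `zeta a` continuous and zero on `[1, ∞)`.
def zeta (a : ℕ) (r : ℝ) : ℝ := if 0 < r then profileDeriv (1 - log (min r 1)) / r ^ a else 0

theorem zeta_of_nonpos (a : ℕ) {r : ℝ} (hr : r ≤ 0) : zeta a r = 0 :=
  if_neg hr.not_gt

theorem zeta_of_one_le (a : ℕ) {r : ℝ} (hr : 1 ≤ r) : zeta a r = 0 := by
  simp [zeta, min_eq_right hr, profileDeriv_one]

theorem zeta_of_mem_Ioc (a : ℕ) {r : ℝ} (hr : r ∈ Ioc 0 1) :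
    zeta a r = profileDeriv (1 - log r) / r ^ a := by
  rw [zeta, if_pos hr.1, min_eq_left hr.2]

theorem continuousOn_zeta (a : ℕ) : ContinuousOn (zeta a) (Ioi 0) := by
  have hlog : ContinuousOn (fun r => 1 - log (min r 1)) (Ioi 0) := by
    fun_prop (disch := intro r hr; exact (lt_min hr one_pos).ne')
  have hmaps : MapsTo (fun r => 1 - log (min r 1)) (Ioi 0) {0}ᶜ := fun r hr => by
    have := log_nonpos (lt_min hr one_pos).le (min_le_right r 1)
    simp only [mem_compl_iff, mem_singleton_iff]; linarith
  refine ((continuousOn_profileDeriv.comp hlog hmaps).div (by fun_prop) fun r hr =>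
    pow_ne_zero a (ne_of_gt hr)).congr fun r hr => if_pos hr

theorem zeta_mul_pow_sub_one {a : ℕ} (ha : 1 ≤ a) (r : ℝ) :
    zeta a r * r ^ (a - 1) = zeta 1 r := by
  rcases le_or_gt r 0 with hr | hr
  · simp [zeta_of_nonpos _ hr]
  · rw [zeta, zeta, if_pos hr, if_pos hr, ← pow_sub_one_mul (by omega : a ≠ 0)]
    field_simp

theorem tendsto_pow_mul_zeta (a : ℕ) :
    Tendsto (fun t => t ^ a * zeta a t) (𝓝[>] 0) (𝓝 0) := by
  refine (tendsto_profileDeriv_atTop.comp tendsto_one_sub_log_nhdsGT_zero).congr' ?_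
  filter_upwards [Ioc_mem_nhdsGT one_pos] with t ht
  rw [zeta_of_mem_Ioc a ht, Function.comp_apply, mul_div_cancel₀ _ (pow_ne_zero _ ht.1.ne')]

theorem hasDerivAt_profile_comp_one_sub_log {r : ℝ} (hr : r ∈ Ioc 0 1) :
    HasDerivAt (fun x => profile (1 - log x)) (-zeta 1 r) r := by
  rw [zeta_of_mem_Ioc 1 hr, pow_one]
  exact hasDerivAt_comp_one_sub_log
    (hasDerivAt_profile (one_pos.trans_le (one_le_one_sub_log hr)).ne') hr.1.ne'

theorem integral_Ioi_zeta_one {t : ℝ} (ht : t ∈ Ioc 0 1) :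
    ∫ r in Ioi t, zeta 1 r = profile (1 - log t) := by
  rw [setIntegral_Ioi_eq_intervalIntegral_of_eq_zero ht.2 fun r hr => zeta_of_one_le 1 hr.le,
    intervalIntegral.integral_eq_sub_of_hasDerivAt (f := fun x => -profile (1 - log x))]
  · simp [profile_one]
  · rw [uIcc_of_le ht.2]
    exact fun r hr =>
      (hasDerivAt_profile_comp_one_sub_log ⟨ht.1.trans_le hr.1, hr.2⟩).neg.congr_deriv (neg_neg _)
  · exact ((continuousOn_zeta 1).mono fun r hr =>
      ht.1.trans_le (uIcc_of_le ht.2 ▸ hr).1).intervalIntegrable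

theorem tendsto_integral_Ioi_zeta_one :
    Tendsto (fun t => ∫ r in Ioi t, zeta 1 r) (𝓝[>] 0) (𝓝 0) := by
  refine (tendsto_profile_atTop.comp tendsto_one_sub_log_nhdsGT_zero).congr' ?_
  filter_upwards [Ioc_mem_nhdsGT one_pos] with t ht
  rw [integral_Ioi_zeta_one ht, Function.comp_apply]

theorem lintegral_abs_zeta_one_eq_top : ∫⁻ r in Ioi 0, ENNReal.ofReal |zeta 1 r| = ⊤ := by
  have hV : ∀ r ∈ Ioc (0 : ℝ) 1, HasDerivAt (fun x => -minorant (1 - log x))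
      (minorantDeriv (1 - log r) / r) r := fun r hr =>
    (hasDerivAt_comp_one_sub_log
      (hasDerivAt_minorant (one_pos.trans_le (one_le_one_sub_log hr)).ne') hr.1.ne').neg.congr_deriv
      (neg_neg _)
  have hle : ∀ r ∈ Ioc (0 : ℝ) 1, minorantDeriv (1 - log r) / r ≤ |zeta 1 r| := fun r hr => by
    rw [zeta_of_mem_Ioc 1 hr, pow_one, abs_div, abs_of_pos hr.1]
    exact div_le_div_of_nonneg_right (minorantDeriv_le_abs_profileDeriv (one_le_one_sub_log hr))
      hr.1.le
  have hlim : Tendsto (fun x => -minorant (1 - log x)) (𝓝[>] 0) atBot :=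
    tendsto_neg_atTop_atBot.comp (tendsto_minorant_atTop.comp tendsto_one_sub_log_nhdsGT_zero)
  refine top_unique ((lintegral_ofReal_abs_Ioc_eq_top_of_hasDerivAt_le one_pos
    ((continuousOn_zeta 1).mono Ioc_subset_Ioi_self) hV hle hlim).symm.trans_le
    (lintegral_mono_set Ioc_subset_Ioi_self))

end ConditionalKernel

open ConditionalKernel

/-- For every integer `a ≥ 1` there is a continuous function `ζ`
on `(0,∞)` with bounded support such that `t^a ζ(t) → 0` as `t → 0⁺` and
`∫_t^∞ ζ(r) r^{a-1} dr` converges as `t → 0⁺` (i.e. `ζ ∈ D^a`), while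
`∫_0^∞ |ζ(r)| r^{a-1} dr = ∞`. -/
theorem stmt13 (a : ℕ) (ha : 1 ≤ a) :
    ∃ ζ : ℝ → ℝ,
      ContinuousOn ζ (Set.Ioi 0) ∧ (∀ t ≤ (0 : ℝ), ζ t = 0) ∧
      (∃ M : ℝ, ∀ t : ℝ, M < t → ζ t = 0) ∧
      Tendsto (fun t : ℝ => t ^ a * ζ t) (nhdsWithin 0 (Set.Ioi 0)) (𝓝 0) ∧
      (∃ L : ℝ, Tendsto (fun t : ℝ => ∫ r in Set.Ioi t, ζ r * r ^ (a - 1))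
        (nhdsWithin 0 (Set.Ioi 0)) (𝓝 L)) ∧
      ∫⁻ r in Set.Ioi (0 : ℝ), ENNReal.ofReal (|ζ r| * r ^ (a - 1)) = ⊤ := by
  refine ⟨zeta a, continuousOn_zeta a, fun t => zeta_of_nonpos a,
    ⟨1, fun t ht => zeta_of_one_le a ht.le⟩, tendsto_pow_mul_zeta a, ⟨0, ?_⟩, ?_⟩
  · simpa only [zeta_mul_pow_sub_one ha] using tendsto_integral_Ioi_zeta_one
  · rw [← lintegral_abs_zeta_one_eq_top]
    refine setLIntegral_congr_fun measurableSet_Ioi fun r hr => ?_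
    rw [← zeta_mul_pow_sub_one ha, abs_mul, abs_of_pos (pow_pos (mem_Ioi.mp hr) (a - 1))]
end
end
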